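/- arXiv:1803.02760 — 9 statements merged into one kernel-verified Lean document; each statement's English description precedes it below -/
import Mathlib

section
/- Define the parity matrix 𝒫 := −(σ₁ ⊗ σ₁) and the time-reversal matrix T := σ₁ ⊗ σ₀. Then 𝒫 = i·Γ⁰Γ⁵ and T = i·Γ¹, and for all real k₁, k₂: 𝒫·H₀(k₁,k₂)·𝒫 = H₀(−k₁,−k₂) and T·conj(H₀(k₁,k₂))·T = H₀(−k₁,−k₂), where conj denotes entrywise complex conjugation of the matrix. -/
open Matrix Complex

noncomputable section

/-- The 2×2 identity (σ₀). -/
def σ0 : Matrix (Fin 2) (Fin 2) ℂ := 1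
/-- Pauli matrix σ₁. -/
def σ1 : Matrix (Fin 2) (Fin 2) ℂ := !![0, 1; 1, 0]
/-- Pauli matrix σ₂. -/
def σ2 : Matrix (Fin 2) (Fin 2) ℂ := !![0, -Complex.I; Complex.I, 0]
/-- Pauli matrix σ₃. -/
def σ3 : Matrix (Fin 2) (Fin 2) ℂ := !![1, 0; 0, -1]

/-- Kronecker product of two 2×2 complex matrices, as a 4×4 matrix
(the first factor indexes the 2×2 blocks). -/
def kron (A B : Matrix (Fin 2) (Fin 2) ℂ) : Matrix (Fin 4) (Fin 4) ℂ :=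
  !![A 0 0 * B 0 0, A 0 0 * B 0 1, A 0 1 * B 0 0, A 0 1 * B 0 1;
     A 0 0 * B 1 0, A 0 0 * B 1 1, A 0 1 * B 1 0, A 0 1 * B 1 1;
     A 1 0 * B 0 0, A 1 0 * B 0 1, A 1 1 * B 0 0, A 1 1 * B 0 1;
     A 1 0 * B 1 0, A 1 0 * B 1 1, A 1 1 * B 1 0, A 1 1 * B 1 1]

/-- Γ⁰ = −(σ₂ ⊗ σ₁). -/
def Γ0 : Matrix (Fin 4) (Fin 4) ℂ := -(kron σ2 σ1)
/-- Γ¹ = −i (σ₁ ⊗ σ₀). -/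
def Γ1 : Matrix (Fin 4) (Fin 4) ℂ := -(Complex.I • kron σ1 σ0)
/-- Γ² = −i (σ₂ ⊗ σ₃). -/
def Γ2 : Matrix (Fin 4) (Fin 4) ℂ := -(Complex.I • kron σ2 σ3)
/-- Γ³ = −i (σ₂ ⊗ σ₂). -/
def Γ3 : Matrix (Fin 4) (Fin 4) ℂ := -(Complex.I • kron σ2 σ2)
/-- Γ⁵ = i Γ⁰Γ¹Γ²Γ³. -/
def Γ5 : Matrix (Fin 4) (Fin 4) ℂ := Complex.I • (Γ0 * Γ1 * Γ2 * Γ3)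

/-- The free graphene Hamiltonian in momentum space,
H₀(k₁,k₂) = −(k₁ (σ₃ ⊗ σ₁) + k₂ (σ₀ ⊗ σ₂)). -/
def H0 (k1 k2 : ℝ) : Matrix (Fin 4) (Fin 4) ℂ :=
  -((k1 : ℂ) • kron σ3 σ1 + (k2 : ℂ) • kron σ0 σ2)

/-- The parity matrix 𝒫 = −(σ₁ ⊗ σ₁). -/
def Ppar : Matrix (Fin 4) (Fin 4) ℂ := -(kron σ1 σ1)
/-- The time-reversal matrix T = σ₁ ⊗ σ₀. -/
def Tmat : Matrix (Fin 4) (Fin 4) ℂ := kron σ1 σ0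

lemma G0_eq : Γ0 = !![0, 0, 0, Complex.I; 0, 0, Complex.I, 0;
    0, -Complex.I, 0, 0; -Complex.I, 0, 0, 0] := by
  ext i j; fin_cases i <;> fin_cases j <;> simp [Matrix.vecHead, Matrix.vecTail, Γ0, kron, σ0, σ1, σ2, σ3]

lemma G1_eq : Γ1 = !![0, 0, -Complex.I, 0; 0, 0, 0, -Complex.I;
    -Complex.I, 0, 0, 0; 0, -Complex.I, 0, 0] := by
  ext i j; fin_cases i <;> fin_cases j <;> simp [Matrix.vecHead, Matrix.vecTail, Γ1, kron, σ0, σ1, σ2, σ3]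

lemma G2_eq : Γ2 = !![0, 0, -1, 0; 0, 0, 0, 1; 1, 0, 0, 0; 0, -1, 0, 0] := by
  ext i j; fin_cases i <;> fin_cases j <;> simp [Matrix.vecHead, Matrix.vecTail, Γ2, kron, σ0, σ1, σ2, σ3]

lemma G3_eq : Γ3 = !![0, 0, 0, Complex.I; 0, 0, -Complex.I, 0;
    0, -Complex.I, 0, 0; Complex.I, 0, 0, 0] := by
  ext i j; fin_cases i <;> fin_cases j <;> simp [Matrix.vecHead, Matrix.vecTail, Γ3, kron, σ0, σ1, σ2, σ3]

lemma G01_eq : Γ0 * Γ1 = !![0, 1, 0, 0; 1, 0, 0, 0; 0, 0, 0, -1; 0, 0, -1, 0] := by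
  rw [G0_eq, G1_eq]
  ext i j
  fin_cases i <;> fin_cases j <;>
    simp [Matrix.vecHead, Matrix.vecTail, Matrix.mul_apply, Fin.sum_univ_four,
      Complex.I_mul_I]

lemma G23_eq : Γ2 * Γ3 = !![0, Complex.I, 0, 0; Complex.I, 0, 0, 0;
    0, 0, 0, Complex.I; 0, 0, Complex.I, 0] := by
  rw [G2_eq, G3_eq]
  ext i j
  fin_cases i <;> fin_cases j <;>
    simp [Matrix.vecHead, Matrix.vecTail, Matrix.mul_apply, Fin.sum_univ_four,
      Complex.I_mul_I]

lemma G5_eq : Γ5 = !![-1, 0, 0, 0; 0, -1, 0, 0; 0, 0, 1, 0; 0, 0, 0, 1] := by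
  rw [Γ5, show Γ0 * Γ1 * Γ2 * Γ3 = (Γ0 * Γ1) * (Γ2 * Γ3) by rw [mul_assoc], G01_eq, G23_eq]
  ext i j
  fin_cases i <;> fin_cases j <;>
    simp [Matrix.vecHead, Matrix.vecTail, Matrix.mul_apply, Fin.sum_univ_four,
      Complex.I_mul_I]

lemma P_eq : Ppar = !![0, 0, 0, -1; 0, 0, -1, 0; 0, -1, 0, 0; -1, 0, 0, 0] := by
  ext i j; fin_cases i <;> fin_cases j <;> simp [Matrix.vecHead, Matrix.vecTail, Ppar, kron, σ1]

lemma T_eq : Tmat = !![0, 0, 1, 0; 0, 0, 0, 1; 1, 0, 0, 0; 0, 1, 0, 0] := by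
  ext i j; fin_cases i <;> fin_cases j <;> simp [Matrix.vecHead, Matrix.vecTail, Tmat, kron, σ0, σ1]

lemma H0_eq (k1 k2 : ℝ) : H0 k1 k2 =
    !![0, -k1 + Complex.I * k2, 0, 0;
       -k1 - Complex.I * k2, 0, 0, 0;
       0, 0, 0, k1 + Complex.I * k2;
       0, 0, k1 - Complex.I * k2, 0] := by
  ext i j
  fin_cases i <;> fin_cases j <;>
    simp [Matrix.vecHead, Matrix.vecTail, H0, kron, σ0, σ1, σ2, σ3] <;> ring

set_option maxHeartbeats 2000000 in
/-- 𝒫 = iΓ⁰Γ⁵, T = iΓ¹, and the parity and time-reversal symmetries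
of the free Hamiltonian: 𝒫 H₀(k) 𝒫 = H₀(−k) and T H₀*(k) T = H₀(−k). -/
theorem parity_time_reversal_symmetries :
    Ppar = Complex.I • (Γ0 * Γ5) ∧ Tmat = Complex.I • Γ1 ∧
    (∀ k1 k2 : ℝ,
      Ppar * H0 k1 k2 * Ppar = H0 (-k1) (-k2) ∧
      Tmat * (H0 k1 k2).map (starRingEnd ℂ) * Tmat = H0 (-k1) (-k2)) := by
  refine ⟨?_, ?_, fun k1 k2 => ⟨?_, ?_⟩⟩
  · rw [P_eq, G0_eq, G5_eq]
    ext i j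
    fin_cases i <;> fin_cases j <;>
      simp [Matrix.vecHead, Matrix.vecTail, Matrix.mul_apply, Fin.sum_univ_four, Complex.I_mul_I]
  · rw [T_eq, G1_eq]
    ext i j
    fin_cases i <;> fin_cases j <;> simp [Matrix.vecHead, Matrix.vecTail, Complex.I_mul_I]
  · rw [P_eq, H0_eq, H0_eq]
    ext i j
    fin_cases i <;> fin_cases j <;>
      simp [Matrix.vecHead, Matrix.vecTail, Matrix.mul_apply, Fin.sum_univ_four] <;> push_cast <;> ring
  · have hm : (H0 k1 k2).map (starRingEnd ℂ) =
        !![0, -k1 - Complex.I * k2, 0, 0;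
           -k1 + Complex.I * k2, 0, 0, 0;
           0, 0, 0, k1 - Complex.I * k2;
           0, 0, k1 + Complex.I * k2, 0] := by
      rw [H0_eq]
      ext i j
      fin_cases i <;> fin_cases j <;>
        simp [Matrix.vecHead, Matrix.vecTail, Matrix.map_apply, Complex.conj_ofReal,
          Complex.conj_I] <;> ring
    rw [T_eq, hm, H0_eq]
    ext i j
    fin_cases i <;> fin_cases j <;>
      simp [Matrix.vecHead, Matrix.vecTail, Matrix.mul_apply, Fin.sum_univ_four] <;>
      push_cast <;> ring
end
end

section
/- Let ℒ := σ₁ ⊗ σ₂. Among the four admissible mass terms in the Hamiltonian, exactly the Dirac (real Kekulé) mass Γ⁰ and the Haldane mass Γ⁰Γ⁵Γ³ respect the symmetry ℒ, while the imaginary Kekulé mass Γ⁰Γ⁵ and the Semenoff mass Γ⁰Γ³ break it; concretely: ℒ·Γ⁰ = Γ⁰·ℒ, ℒ·(Γ⁰Γ⁵Γ³) = (Γ⁰Γ⁵Γ³)·ℒ, ℒ·(Γ⁰Γ⁵) = −(Γ⁰Γ⁵)·ℒ, and ℒ·(Γ⁰Γ³) = −(Γ⁰Γ³)·ℒ. 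-/
open Matrix Complex

noncomputable section

/-- The symmetry matrix ℒ = σ₁ ⊗ σ₂. -/
def Lsym : Matrix (Fin 4) (Fin 4) ℂ := kron σ1 σ2


lemma Γ0_eq : Γ0 = !![0,0,0,Complex.I; 0,0,Complex.I,0; 0,-Complex.I,0,0; -Complex.I,0,0,0] := by
  ext i j; fin_cases i <;> fin_cases j <;> simp [Γ0, kron, σ1, σ2, Matrix.vecHead, Matrix.vecTail]

lemma Γ1_eq : Γ1 = !![0,0,-Complex.I,0; 0,0,0,-Complex.I; -Complex.I,0,0,0; 0,-Complex.I,0,0] := by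
  ext i j; fin_cases i <;> fin_cases j <;> simp [Γ1, kron, σ0, σ1, Matrix.vecHead, Matrix.vecTail]

lemma Γ2_eq : Γ2 = !![0,0,-1,0; 0,0,0,1; 1,0,0,0; 0,-1,0,0] := by
  ext i j; fin_cases i <;> fin_cases j <;>
    simp [Γ2, kron, σ2, σ3, Complex.ext_iff, Matrix.vecHead, Matrix.vecTail]

lemma Γ3_eq : Γ3 = !![0,0,0,Complex.I; 0,0,-Complex.I,0; 0,-Complex.I,0,0; Complex.I,0,0,0] := by
  ext i j; fin_cases i <;> fin_cases j <;>
    simp [Γ3, kron, σ2, Complex.ext_iff, Matrix.vecHead, Matrix.vecTail]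

set_option maxHeartbeats 1000000 in
lemma Γ5_eq : Γ5 = !![-1,0,0,0; 0,-1,0,0; 0,0,1,0; 0,0,0,1] := by
  rw [Γ5, Γ0_eq, Γ1_eq, Γ2_eq, Γ3_eq]
  ext i j; fin_cases i <;> fin_cases j <;>
    simp [Matrix.mul_apply, Fin.sum_univ_four, Complex.ext_iff, Matrix.vecHead, Matrix.vecTail]

lemma Lsym_eq : Lsym = !![0,0,0,-Complex.I; 0,0,Complex.I,0; 0,-Complex.I,0,0; Complex.I,0,0,0] := by
  ext i j; fin_cases i <;> fin_cases j <;> simp [Lsym, kron, σ1, σ2, Matrix.vecHead, Matrix.vecTail]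


set_option maxHeartbeats 1000000 in
lemma G0G5_eq : Γ0 * Γ5 = !![0,0,0,Complex.I; 0,0,Complex.I,0; 0,Complex.I,0,0; Complex.I,0,0,0] := by
  rw [Γ0_eq, Γ5_eq]
  ext i j; fin_cases i <;> fin_cases j <;>
    simp [Matrix.mul_apply, Fin.sum_univ_four, Matrix.vecHead, Matrix.vecTail]

set_option maxHeartbeats 1000000 in
lemma G0G3_eq : Γ0 * Γ3 = !![-1,0,0,0; 0,1,0,0; 0,0,-1,0; 0,0,0,1] := by
  rw [Γ0_eq, Γ3_eq]
  ext i j; fin_cases i <;> fin_cases j <;>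
    simp [Matrix.mul_apply, Fin.sum_univ_four, Complex.ext_iff, Matrix.vecHead, Matrix.vecTail]

set_option maxHeartbeats 1000000 in
lemma G0G5G3_eq : Γ0 * Γ5 * Γ3 = !![-1,0,0,0; 0,1,0,0; 0,0,1,0; 0,0,0,-1] := by
  rw [G0G5_eq, Γ3_eq]
  ext i j; fin_cases i <;> fin_cases j <;>
    simp [Matrix.mul_apply, Fin.sum_univ_four, Complex.ext_iff, Matrix.vecHead, Matrix.vecTail]

set_option maxHeartbeats 1000000 in
/-- the Dirac mass Γ⁰ and Haldane mass Γ⁰Γ⁵Γ³ respect ℒ, while the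
imaginary Kekulé mass Γ⁰Γ⁵ and Semenoff mass Γ⁰Γ³ break it. -/
theorem mass_terms_L_symmetry :
    Lsym * Γ0 = Γ0 * Lsym ∧
    Lsym * (Γ0 * Γ5 * Γ3) = (Γ0 * Γ5 * Γ3) * Lsym ∧
    Lsym * (Γ0 * Γ5) = -((Γ0 * Γ5) * Lsym) ∧
    Lsym * (Γ0 * Γ3) = -((Γ0 * Γ3) * Lsym) := by
  rw [G0G5G3_eq, G0G5_eq, G0G3_eq, Γ0_eq, Lsym_eq]
  refine ⟨?_, ?_, ?_, ?_⟩ <;>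
  · ext i j
    fin_cases i <;> fin_cases j <;>
      simp [Matrix.mul_apply, Fin.sum_univ_four, Complex.ext_iff, Matrix.vecHead, Matrix.vecTail]
end
end

section
/- Let 𝔐 be a 4×4 complex matrix anticommuting with Γ⁰Γ¹ and with Γ⁰Γ²: 𝔐·(Γ⁰Γ¹) + (Γ⁰Γ¹)·𝔐 = 0 and 𝔐·(Γ⁰Γ²) + (Γ⁰Γ²)·𝔐 = 0. Then 𝔐 commutes with ℒ := σ₁ ⊗ σ₂ (i.e. 𝔐·ℒ = ℒ·𝔐) if and only if 𝔐 anticommutes with Γ¹ (i.e. 𝔐·Γ¹ + Γ¹·𝔐 = 0). -/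
open Matrix Complex

noncomputable section

lemma aux_hG : Γ0 * Γ2 = kron σ0 σ2 := by
  ext i j
  fin_cases i <;> fin_cases j <;>
    simp [Γ0, Γ2, kron, σ0, σ1, σ2, σ3, Matrix.mul_apply, Fin.sum_univ_four,
      Matrix.one_apply, Matrix.vecHead, Matrix.vecTail, Matrix.smul_apply,
      Matrix.neg_apply] <;> ring_nf

lemma aux_hL : Lsym = Complex.I • (Γ1 * kron σ0 σ2) := by
  ext i j
  fin_cases i <;> fin_cases j <;>
    simp [Lsym, Γ1, kron, σ0, σ1, σ2, Matrix.mul_apply, Fin.sum_univ_four,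
      Matrix.one_apply, Matrix.vecHead, Matrix.vecTail, Matrix.smul_apply,
      Matrix.neg_apply]

lemma aux_hA : kron σ0 σ2 * kron σ0 σ2 = 1 := by
  ext i j
  fin_cases i <;> fin_cases j <;>
    simp [kron, σ0, σ2, Matrix.mul_apply, Fin.sum_univ_four,
      Matrix.one_apply, Matrix.vecHead, Matrix.vecTail]

/-- for a mass term 𝔐 anticommuting with Γ⁰Γ¹ and Γ⁰Γ², respecting
the symmetry ℒ is equivalent to anticommuting with Γ¹. -/
theorem L_symmetry_iff_anticommutes_Gamma1
    (M : Matrix (Fin 4) (Fin 4) ℂ)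
    (h1 : M * (Γ0 * Γ1) + (Γ0 * Γ1) * M = 0)
    (h2 : M * (Γ0 * Γ2) + (Γ0 * Γ2) * M = 0) :
    M * Lsym = Lsym * M ↔ M * Γ1 + Γ1 * M = 0 := by
  rw [aux_hG] at h2
  have hM : M * kron σ0 σ2 = -(kron σ0 σ2 * M) := by
    linear_combination (norm := noncomm_ring) h2
  have key : M * Lsym - Lsym * M = Complex.I • ((M * Γ1 + Γ1 * M) * kron σ0 σ2) := by
    rw [aux_hL, Matrix.mul_smul, Matrix.smul_mul, ← Matrix.mul_assoc,
      Matrix.mul_assoc Γ1 (kron σ0 σ2) M, ← neg_neg (kron σ0 σ2 * M), ← hM]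
    rw [← smul_sub]
    congr 1
    noncomm_ring
  constructor
  · intro h
    have h0 : Complex.I • ((M * Γ1 + Γ1 * M) * kron σ0 σ2) = 0 := by
      rw [← key, h, sub_self]
    have h0' : (M * Γ1 + Γ1 * M) * kron σ0 σ2 = 0 := by
      rcases smul_eq_zero.mp h0 with h' | h'
      · exact absurd h' Complex.I_ne_zero
      · exact h'
    have := congrArg (· * kron σ0 σ2) h0'
    simpa [Matrix.mul_assoc, aux_hA] using this
  · intro h
    have h0 : M * Lsym - Lsym * M = 0 := by rw [key, h]; simp
    exact sub_eq_zero.mp h0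
end
end

section
/- Let m, k₂ ∈ ℝ, W > 0, α ∈ {1, −1}, and let v_α := (i·α, −1, −i·α, 1) ∈ ℂ⁴. Then the function φ(x) := e^{−m·x}·v_α is a gapless edge mode of the armchair nanoribbon with Dirac (real Kekulé) mass: it satisfies (1 + i·Γ¹)·φ(x) = 0 for all x ∈ ℝ (in particular the armchair boundary conditions at x = 0 and x = W hold), and it solves the transverse eigenvalue equation −i·Γ⁰Γ¹·φ'(x) + k₂·Γ⁰Γ²·φ(x) + m·Γ⁰·φ(x) = (α·k₂)·φ(x) for all x ∈ ℝ. -/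
open Matrix Complex

set_option maxHeartbeats 2000000

noncomputable section

/-- φ(x) = e^{−m x} (iα, −1, −iα, 1) is a gapless edge mode of the
armchair nanoribbon with Dirac (real Kekulé) mass mΓ⁰: it satisfies the armchair
condition (1 + iΓ¹)φ(x) = 0 everywhere (hence at x = 0 and x = W) and solves the
transverse eigenvalue equation with energy Ω = α k₂. -/
theorem gapless_edge_modes_dirac_mass (m k2 W α : ℝ) (hW : W > 0)
    (hα : α = 1 ∨ α = -1)
    (v : Fin 4 → ℂ)
    (hv : v = ![Complex.I * (α : ℂ), -1, -Complex.I * (α : ℂ), 1])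
    (φ : ℝ → Fin 4 → ℂ)
    (hφ : φ = fun x : ℝ => Complex.exp (-(m : ℂ) * (x : ℂ)) • v) :
    (∀ x : ℝ, ((1 : Matrix (Fin 4) (Fin 4) ℂ) + Complex.I • Γ1).mulVec (φ x) = 0) ∧
    (∀ x : ℝ,
      (-Complex.I) • (Γ0 * Γ1).mulVec (deriv φ x)
        + (k2 : ℂ) • (Γ0 * Γ2).mulVec (φ x)
        + ((m : ℂ) • Γ0).mulVec (φ x)
      = ((α : ℂ) * (k2 : ℂ)) • φ x) := by
  have hα2 : (α:ℂ) * (α:ℂ) = 1 := by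
    rcases hα with h | h <;> subst h <;> norm_num
  have hderiv : ∀ x : ℝ, deriv φ x = (-(m:ℂ) * Complex.exp (-(m:ℂ) * x)) • v := by
    intro x
    have h1 : HasDerivAt (fun x : ℝ => -(m:ℂ) * (x:ℂ)) (-(m:ℂ)) x := by
      simpa using ((Complex.ofRealCLM.hasDerivAt (x := x)).const_mul (-(m:ℂ)))
    have h2 := (h1.cexp).smul_const v
    rw [hφ]
    simpa [mul_comm] using h2.deriv
  constructor
  · intro x
    funext i
    subst hv hφ
    fin_cases i <;>
      simp [Matrix.mulVec, dotProduct, Fin.sum_univ_four, Γ1, kron, σ1, σ0,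
        Matrix.one_apply, Complex.ext_iff] <;> ring
  · intro x
    rw [hderiv, ← Matrix.mulVec_mulVec, ← Matrix.mulVec_mulVec, Matrix.smul_mulVec]
    funext i
    subst hv hφ
    have hI := Complex.I_sq
    fin_cases i <;>
      simp [Matrix.mulVec, dotProduct, Fin.sum_univ_four, Γ0, Γ1, Γ2, kron,
        σ1, σ0, σ2, σ3, neg_mul]
    · linear_combination (Complex.I * m * Complex.exp (-((m:ℂ)*x))) * hI
        - (Complex.I * Complex.exp (-((m:ℂ)*x)) * (k2:ℂ)) * hα2
    · linear_combination (Complex.exp (-((m:ℂ)*x)) * (α:ℂ) * (k2:ℂ)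
        - (m:ℂ) * Complex.exp (-((m:ℂ)*x)) * (α:ℂ) * Complex.I ^ 2) * hI
    · linear_combination (Complex.I * m * Complex.exp (-((m:ℂ)*x))) * hI
        + (Complex.I * Complex.exp (-((m:ℂ)*x)) * (k2:ℂ)) * hα2
    · linear_combination (-(Complex.exp (-((m:ℂ)*x)) * (α:ℂ) * (k2:ℂ))
        - (m:ℂ) * Complex.exp (-((m:ℂ)*x)) * (α:ℂ) * Complex.I ^ 2) * hI
end
end

section
/- Let m, m₃, k₂ ∈ ℝ, W > 0, α ∈ {1, −1}, set s := √(k₂² + m₃²), and define v := (i·(m₃ − α·s), k₂, −i·(m₃ − α·s), −k₂) ∈ ℂ⁴. Then: (i) (1 + i·Γ¹)·v = 0; (ii) (k₂·Γ⁰Γ² + m₃·Γ⁰Γ³)·v = (α·s)·v; (iii) the function φ(x) := e^{−m·x}·v solves the transverse eigenvalue equation −i·Γ⁰Γ¹·φ'(x) + k₂·Γ⁰Γ²·φ(x) + (m·Γ⁰ + m₃·Γ⁰Γ³)·φ(x) = (α·s)·φ(x) for all x ∈ ℝ and satisfies (1 + i·Γ¹)·φ(x) = 0 for all x ∈ ℝ;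 (iv) if k₂ ≠ 0 then v ≠ 0. These are the gapped edge modes of a metallic armchair nanoribbon with combined real-Kekulé and Semenoff (staggered potential) distortion. -/
open Matrix Complex

noncomputable section
set_option maxHeartbeats 1000000

/-- the gapped edge modes of a metallic armchair nanoribbon with
combined real-Kekulé and Semenoff distortion m Γ⁰ + m₃ Γ⁰Γ³. With
s = √(k₂² + m₃²) and v = (i(m₃ − αs), k₂, −i(m₃ − αs), −k₂), one has
(1 + iΓ¹)v = 0, (k₂ Γ⁰Γ² + m₃ Γ⁰Γ³)v = αs·v, φ(x) = e^{−mx} v solves the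
transverse eigenvalue equation with energy Ω = αs and satisfies the armchair
boundary conditions everywhere, and v ≠ 0 whenever k₂ ≠ 0. -/
theorem gapped_edge_modes_semenoff (m m3 k2 W α : ℝ) (hW : W > 0)
    (hα : α = 1 ∨ α = -1)
    (s : ℝ) (hs : s = Real.sqrt (k2 ^ 2 + m3 ^ 2))
    (v : Fin 4 → ℂ)
    (hv : v = ![Complex.I * ((m3 : ℂ) - (α : ℂ) * (s : ℂ)), (k2 : ℂ),
                -(Complex.I * ((m3 : ℂ) - (α : ℂ) * (s : ℂ))), -(k2 : ℂ)])
    (φ : ℝ → Fin 4 → ℂ)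
    (hφ : φ = fun x : ℝ => Complex.exp (-(m : ℂ) * (x : ℂ)) • v) :
    ((1 : Matrix (Fin 4) (Fin 4) ℂ) + Complex.I • Γ1).mulVec v = 0 ∧
    ((k2 : ℂ) • (Γ0 * Γ2) + (m3 : ℂ) • (Γ0 * Γ3)).mulVec v
      = ((α : ℂ) * (s : ℂ)) • v ∧
    (∀ x : ℝ,
      (-Complex.I) • (Γ0 * Γ1).mulVec (deriv φ x)
        + (k2 : ℂ) • (Γ0 * Γ2).mulVec (φ x)
        + ((m : ℂ) • Γ0 + (m3 : ℂ) • (Γ0 * Γ3)).mulVec (φ x)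
      = ((α : ℂ) * (s : ℂ)) • φ x) ∧
    (∀ x : ℝ, ((1 : Matrix (Fin 4) (Fin 4) ℂ) + Complex.I • Γ1).mulVec (φ x) = 0) ∧
    (k2 ≠ 0 → v ≠ 0) := by
  have hs2 : (s : ℂ) * (s : ℂ) = (k2 : ℂ) ^ 2 + (m3 : ℂ) ^ 2 := by
    have h : s * s = k2 ^ 2 + m3 ^ 2 := by
      rw [hs]; exact Real.mul_self_sqrt (by positivity)
    exact_mod_cast h
  have hα2 : (α : ℂ) * (α : ℂ) = 1 := by
    rcases hα with h | h <;> subst h <;> norm_num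
  have hG01 : Γ0 * Γ1 = !![0,1,0,0; 1,0,0,0; 0,0,0,-1; 0,0,-1,0] := by
    ext i j
    fin_cases i <;> fin_cases j <;>
      simp [Matrix.mul_apply, Fin.sum_univ_four, Γ0, Γ1, kron, σ0, σ1, σ2, Matrix.vecHead, Matrix.vecTail]
  have hG02 : Γ0 * Γ2 = !![0,-Complex.I,0,0; Complex.I,0,0,0;
      0,0,0,-Complex.I; 0,0,Complex.I,0] := by
    ext i j
    fin_cases i <;> fin_cases j <;>
      simp [Matrix.mul_apply, Fin.sum_univ_four, Γ0, Γ2, kron, σ1, σ2, σ3, Matrix.vecHead, Matrix.vecTail]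
  have hG03 : Γ0 * Γ3 = !![-1,0,0,0; 0,1,0,0; 0,0,-1,0; 0,0,0,1] := by
    ext i j
    fin_cases i <;> fin_cases j <;>
      simp [Matrix.mul_apply, Fin.sum_univ_four, Γ0, Γ3, kron, σ1, σ2, Matrix.vecHead, Matrix.vecTail]
  have hbc : ((1 : Matrix (Fin 4) (Fin 4) ℂ) + Complex.I • Γ1).mulVec v = 0 := by
    subst hv
    funext i
    fin_cases i <;>
      simp [Matrix.mulVec, dotProduct, Fin.sum_univ_four, Γ1, kron, σ0, σ1,
        Matrix.one_apply] <;> ring_nf <;> simp [Complex.I_sq] <;> ring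
  have heig : ((k2 : ℂ) • (Γ0 * Γ2) + (m3 : ℂ) • (Γ0 * Γ3)).mulVec v
      = ((α : ℂ) * (s : ℂ)) • v := by
    subst hv
    funext i
    have key : ((α:ℂ)*(s:ℂ))*((α:ℂ)*(s:ℂ)) = (k2:ℂ)^2 + (m3:ℂ)^2 := by
      linear_combination ((s:ℂ)*(s:ℂ)) * hα2 + hs2
    fin_cases i <;>
      simp [hG02, hG03, Matrix.mulVec, dotProduct, Fin.sum_univ_four] <;>
      first
      | linear_combination Complex.I * key
      | linear_combination (-Complex.I) * key
      | linear_combination ((k2:ℂ)*((m3:ℂ)-(α:ℂ)*(s:ℂ))) * Complex.I_sq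
      | linear_combination (-((k2:ℂ)*((m3:ℂ)-(α:ℂ)*(s:ℂ)))) * Complex.I_sq
  have hcan : (Complex.I • (Γ0 * Γ1) + Γ0).mulVec v = 0 := by
    have hE : Complex.I • (Γ0 * Γ1) + Γ0
        = Γ0 * ((1 : Matrix (Fin 4) (Fin 4) ℂ) + Complex.I • Γ1) := by
      rw [mul_add, mul_one, Matrix.mul_smul, add_comm]
    rw [hE, ← Matrix.mulVec_mulVec, hbc, Matrix.mulVec_zero]
  have hd : ∀ x : ℝ, deriv φ x
      = (-(m : ℂ) * Complex.exp (-(m : ℂ) * x)) • v := by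
    intro x
    rw [hφ]
    have h0 : HasDerivAt (fun y : ℝ => ((y : ℝ) : ℂ)) 1 x := by
      simpa using (hasDerivAt_id x).ofReal_comp
    have h1 : HasDerivAt (fun y : ℝ => -(m : ℂ) * (y : ℂ)) (-(m : ℂ)) x := by
      simpa using h0.const_mul (-(m : ℂ))
    have hc : HasDerivAt (fun y : ℝ => Complex.exp (-(m : ℂ) * y))
        (-(m : ℂ) * Complex.exp (-(m : ℂ) * x)) x := by
      simpa [mul_comm] using h1.cexp
    exact (hc.smul_const v).deriv
  refine ⟨hbc, heig, ?_, ?_, ?_⟩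
  · intro x
    rw [hd x]
    simp only [hφ]
    set c := Complex.exp (-(m : ℂ) * x) with hcdef
    have expand : (-Complex.I) • (Γ0 * Γ1).mulVec ((-(m : ℂ) * c) • v)
        + (k2 : ℂ) • (Γ0 * Γ2).mulVec (c • v)
        + ((m : ℂ) • Γ0 + (m3 : ℂ) • (Γ0 * Γ3)).mulVec (c • v)
        = ((m : ℂ) * c) • ((Complex.I • (Γ0 * Γ1) + Γ0).mulVec v)
          + c • (((k2 : ℂ) • (Γ0 * Γ2) + (m3 : ℂ) • (Γ0 * Γ3)).mulVec v) := by
      simp only [Matrix.mulVec_smul, Matrix.add_mulVec,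
        Matrix.smul_mulVec, smul_smul]
      module
    rw [expand, hcan, heig, smul_zero, zero_add, smul_smul, smul_smul,
      mul_comm c]
  · intro x
    simp only [hφ]
    rw [Matrix.mulVec_smul, hbc, smul_zero]
  · intro hk h
    apply hk
    have h1 := congrFun h 1
    simp [hv] at h1
    exact_mod_cast h1
end
end

section
/- (Edge-mode reduction theorem.) Let M₁, M₂ be 4×4 complex matrices with M₁·Γ¹ + Γ¹·M₁ = 0 and M₂·Γ¹ = Γ¹·M₂. Let k₂ ∈ ℝ, Ω ∈ ℂ, W > 0, and let ψ : ℝ → ℂ⁴ be differentiable and satisfy, for all x in the closed interval [0, W]: (a) the eigenvalue equation −i·Γ⁰Γ¹·ψ'(x) + k₂·Γ⁰Γ²·ψ(x) + (M₁ + M₂)·ψ(x) = Ω·ψ(x), and (b) the edge-mode condition (1 + i·Γ¹)·ψ(x) = 0. Then for all x in the open interval (0, W): ψ'(x) = −i·(Γ⁰Γ¹)·M₁·ψ(x), and (k₂·Γ⁰Γ² + M₂)·ψ(x) = Ω·ψ(x). -/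
open Matrix Complex

noncomputable section

lemma g0sq' : Γ0 * Γ0 = 1 := by
  ext i j
  fin_cases i <;> fin_cases j <;>
    simp [Γ0, kron, σ1, σ2, Matrix.mul_apply, Fin.sum_univ_four, Matrix.one_apply,
      Matrix.vecHead, Matrix.vecTail] <;> ring_nf

lemma g1g0' : Γ1 * Γ0 = -(Γ0 * Γ1) := by
  ext i j
  fin_cases i <;> fin_cases j <;>
    simp [Γ0, Γ1, kron, σ0, σ1, σ2, Matrix.mul_apply, Fin.sum_univ_four,
      Matrix.vecHead, Matrix.vecTail] <;> ring_nf

lemma g02' : Γ0 * Γ2 = !![0,-Complex.I,0,0; Complex.I,0,0,0; 0,0,0,-Complex.I; 0,0,Complex.I,0] := by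
  ext i j
  fin_cases i <;> fin_cases j <;>
    simp [Γ0, Γ2, kron, σ1, σ2, σ3, Matrix.mul_apply, Fin.sum_univ_four,
      Matrix.vecHead, Matrix.vecTail] <;> ring_nf

lemma g1g02' : Γ1 * (Γ0 * Γ2) = (Γ0 * Γ2) * Γ1 := by
  rw [g02']
  ext i j
  fin_cases i <;> fin_cases j <;>
    simp [Γ1, kron, σ0, σ1, Matrix.mul_apply, Fin.sum_univ_four,
      Matrix.vecHead, Matrix.vecTail] <;> ring_nf

/-- If `(1 + iΓ¹)w = 0` then `Γ¹w = i w`. -/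
lemma edge_eig' (w : Fin 4 → ℂ)
    (h : ((1 : Matrix (Fin 4) (Fin 4) ℂ) + Complex.I • Γ1).mulVec w = 0) :
    Γ1.mulVec w = Complex.I • w := by
  have h' : w + Complex.I • Γ1.mulVec w = 0 := by
    simpa [Matrix.add_mulVec, Matrix.smul_mulVec] using h
  have h2 : Complex.I • Γ1.mulVec w = -w := by
    have := eq_neg_of_add_eq_zero_right h'
    simpa using this.symm ▸ rfl
  have h3 := congrArg (fun z => (-Complex.I : ℂ) • z) h2
  simpa [smul_smul, Complex.I_mul_I] using h3

/-- edge-mode reduction theorem: if M₁ anticommutes with Γ¹, M₂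
commutes with Γ¹, and ψ solves the eigenvalue equation on [0,W] while satisfying
the edge-mode condition (1 + iΓ¹)ψ = 0 on [0,W], then on (0,W) one has
ψ' = −i Γ⁰Γ¹ M₁ ψ and (k₂ Γ⁰Γ² + M₂)ψ = Ωψ. -/
theorem edge_mode_reduction
    (M1 M2 : Matrix (Fin 4) (Fin 4) ℂ)
    (hM1 : M1 * Γ1 + Γ1 * M1 = 0)
    (hM2 : M2 * Γ1 = Γ1 * M2)
    (k2 : ℝ) (Ω : ℂ) (W : ℝ) (hW : W > 0)
    (ψ : ℝ → Fin 4 → ℂ) (hdiff : Differentiable ℝ ψ)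
    (heq : ∀ x ∈ Set.Icc (0 : ℝ) W,
      (-Complex.I) • (Γ0 * Γ1).mulVec (deriv ψ x)
        + (k2 : ℂ) • (Γ0 * Γ2).mulVec (ψ x)
        + (M1 + M2).mulVec (ψ x) = Ω • ψ x)
    (hedge : ∀ x ∈ Set.Icc (0 : ℝ) W,
      ((1 : Matrix (Fin 4) (Fin 4) ℂ) + Complex.I • Γ1).mulVec (ψ x) = 0) :
    ∀ x ∈ Set.Ioo (0 : ℝ) W,
      deriv ψ x = (-Complex.I) • ((Γ0 * Γ1) * M1).mulVec (ψ x) ∧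
      ((k2 : ℂ) • (Γ0 * Γ2) + M2).mulVec (ψ x) = Ω • ψ x := by
  intro x hx
  have hxI : x ∈ Set.Icc (0 : ℝ) W := Set.Ioo_subset_Icc_self hx
  set u := ψ x with hu_def
  set v := deriv ψ x with hv_def
  -- Γ¹ u = i u
  have hu : Γ1.mulVec u = Complex.I • u := edge_eig' u (hedge x hxI)
  -- the edge condition also holds for the derivative
  have hψd : HasDerivAt ψ v x := (hdiff x).hasDerivAt
  have hvcomp : ∀ j, HasDerivAt (fun t => ψ t j) (v j) x :=
    fun j => (hasDerivAt_pi.mp hψd) j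
  have hAv : ((1 : Matrix (Fin 4) (Fin 4) ℂ) + Complex.I • Γ1).mulVec v = 0 := by
    set A : Matrix (Fin 4) (Fin 4) ℂ := (1 : Matrix (Fin 4) (Fin 4) ℂ) + Complex.I • Γ1 with hA
    funext i
    have hone : HasDerivAt (fun t => ∑ j, A i j * ψ t j) (∑ j, A i j * v j) x :=
      HasDerivAt.fun_sum fun j _ => (hvcomp j).const_mul (A i j)
    have hzero : (fun t => ∑ j, A i j * ψ t j) =ᶠ[nhds x] fun _ => (0 : ℂ) := by
      filter_upwards [isOpen_Ioo.mem_nhds hx] with t ht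
      have h0 := hedge t (Set.Ioo_subset_Icc_self ht)
      have h1 := congrFun h0 i
      simpa [Matrix.mulVec, dotProduct] using h1
    have h0d : HasDerivAt (fun t => ∑ j, A i j * ψ t j) (0 : ℂ) x :=
      (hasDerivAt_const x (0 : ℂ)).congr_of_eventuallyEq hzero
    have := hone.unique h0d
    simpa [Matrix.mulVec, dotProduct] using this
  have hv : Γ1.mulVec v = Complex.I • v := edge_eig' v hAv
  -- anticommutation of Γ¹ with M₁
  have hM1'' : Γ1 * M1 + M1 * Γ1 = 0 := by rw [add_comm]; exact hM1
  have hM1' : Γ1 * M1 = -(M1 * Γ1) := eq_neg_of_add_eq_zero_left hM1''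
  -- the eigenvalue equation at x
  have heqx := heq x hxI
  -- rewrite the derivative term using Γ¹v = iv
  have ht1 : (-Complex.I) • (Γ0 * Γ1).mulVec v = Γ0.mulVec v := by
    rw [← Matrix.mulVec_mulVec, hv, Matrix.mulVec_smul, smul_smul]
    simp
  -- set a and b
  set a : Fin 4 → ℂ := Γ0.mulVec v + M1.mulVec u with ha_def
  set b : Fin 4 → ℂ := (k2 : ℂ) • (Γ0 * Γ2).mulVec u + M2.mulVec u - Ω • u with hb_def
  have hab : a + b = 0 := by
    rw [ht1, Matrix.add_mulVec] at heqx
    rw [ha_def, hb_def]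
    rw [← sub_eq_zero] at heqx
    linear_combination (norm := module) heqx
  -- eigenvector properties of a and b under Γ¹
  have d1 : Γ1.mulVec (Γ0.mulVec v) = -(Complex.I • Γ0.mulVec v) := by
    rw [Matrix.mulVec_mulVec, g1g0', Matrix.neg_mulVec, ← Matrix.mulVec_mulVec, hv,
      Matrix.mulVec_smul]
  have d2 : Γ1.mulVec (M1.mulVec u) = -(Complex.I • M1.mulVec u) := by
    rw [Matrix.mulVec_mulVec, hM1', Matrix.neg_mulVec, ← Matrix.mulVec_mulVec, hu,
      Matrix.mulVec_smul]
  have hΓa : Γ1.mulVec a = (-Complex.I) • a := by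
    rw [ha_def, Matrix.mulVec_add, d1, d2]
    module
  have c1 : Γ1.mulVec ((Γ0 * Γ2).mulVec u) = Complex.I • (Γ0 * Γ2).mulVec u := by
    rw [Matrix.mulVec_mulVec, g1g02', ← Matrix.mulVec_mulVec, hu, Matrix.mulVec_smul]
  have c2 : Γ1.mulVec (M2.mulVec u) = Complex.I • M2.mulVec u := by
    rw [Matrix.mulVec_mulVec, ← hM2, ← Matrix.mulVec_mulVec, hu, Matrix.mulVec_smul]
  have hΓb : Γ1.mulVec b = Complex.I • b := by
    rw [hb_def, Matrix.mulVec_sub, Matrix.mulVec_add, Matrix.mulVec_smul, c1, c2,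
      Matrix.mulVec_smul, hu]
    module
  -- from a + b = 0 and the eigenvector properties, a = 0 and b = 0
  have hsum : (-Complex.I) • a + Complex.I • b = 0 := by
    have := congrArg Γ1.mulVec hab
    rw [Matrix.mulVec_add, hΓa, hΓb, Matrix.mulVec_zero] at this
    exact this
  have hb0 : b = 0 := by
    have h1 : Complex.I • (a + b) = 0 := by rw [hab]; simp
    have h2 : Complex.I • a + Complex.I • b = 0 := by
      rw [← smul_add]; exact h1
    have h3 : (Complex.I + Complex.I) • b = 0 := by
      calc (Complex.I + Complex.I) • b
          = (Complex.I • a + Complex.I • b) + ((-Complex.I) • a + Complex.I • b) := by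
            module
        _ = 0 := by rw [h2, hsum, add_zero]
    have h4 : (Complex.I + Complex.I) ≠ 0 := by
      simp [← two_mul, Complex.I_ne_zero]
    exact (smul_eq_zero.mp h3).resolve_left h4
  have ha0 : a = 0 := by
    have := hab
    rw [hb0, add_zero] at this
    exact this
  constructor
  · -- deriv ψ x = -i (Γ⁰Γ¹ M₁) ψ x
    have hGv : Γ0.mulVec v = -(M1.mulVec u) := by
      have := ha0
      rw [ha_def] at this
      linear_combination (norm := module) this
    have hv' : v = -((Γ0 * M1).mulVec u) := by
      have := congrArg Γ0.mulVec hGv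
      rw [Matrix.mulVec_mulVec, g0sq', Matrix.one_mulVec] at this
      rw [this, Matrix.mulVec_neg, Matrix.mulVec_mulVec]
    have hrhs : ((Γ0 * Γ1) * M1).mulVec u = (-Complex.I) • (Γ0 * M1).mulVec u := by
      rw [Matrix.mul_assoc, hM1', mul_neg, ← Matrix.mul_assoc, Matrix.neg_mulVec,
        ← Matrix.mulVec_mulVec, hu, Matrix.mulVec_smul]
      module
    rw [hv', hrhs, smul_smul]
    simp
  · -- (k₂ Γ⁰Γ² + M₂) ψ x = Ω ψ x
    rw [Matrix.add_mulVec, Matrix.smul_mulVec]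
    have := hb0
    rw [hb_def] at this
    linear_combination (norm := module) this
end
end

section
/- (Gap of edge modes.) Let M₂ be a 4×4 complex matrix and m₂ ∈ ℝ such that M₂·M₂ = m₂²·1 (a scalar multiple of the 4×4 identity matrix) and M₂·(Γ⁰Γ²) + (Γ⁰Γ²)·M₂ = 0. Let k₂ ∈ ℝ and Ω ∈ ℂ. If there exists a nonzero vector v ∈ ℂ⁴ with (k₂·Γ⁰Γ² + M₂)·v = Ω·v, then Ω² = k₂² + m₂². In particular, edge modes of an armchair nanoribbon whose ℒ-breaking mass component M₂ satisfies these relations have dispersion Ω = ±√(k₂² + m₂²), and they are gapless (Ω = ±k₂) exactly when m₂ = 0. -/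
open Matrix Complex

noncomputable section

lemma A_sq : (Γ0 * Γ2) * (Γ0 * Γ2) = (1 : Matrix (Fin 4) (Fin 4) ℂ) := by
  ext i j
  fin_cases i <;> fin_cases j <;>
    norm_num [Γ0, Γ2, kron, σ1, σ2, σ3, Matrix.mul_apply, Fin.sum_univ_four,
      Matrix.one_apply, Complex.ext_iff, Matrix.vecHead, Matrix.vecTail, Fin.ext_iff,
        Matrix.cons_val_two, Matrix.cons_val_three]

/-- gap of edge modes: if M₂² = m₂²·1 and M₂ anticommutes with Γ⁰Γ²,
then any nonzero solution of (k₂ Γ⁰Γ² + M₂)v = Ωv has Ω² = k₂² + m₂²; in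
particular Ω = ±k₂ (gapless) exactly when m₂ = 0. -/
theorem edge_mode_gap
    (M2 : Matrix (Fin 4) (Fin 4) ℂ) (m2 : ℝ)
    (hsq : M2 * M2 = ((m2 ^ 2 : ℝ) : ℂ) • (1 : Matrix (Fin 4) (Fin 4) ℂ))
    (hanti : M2 * (Γ0 * Γ2) + (Γ0 * Γ2) * M2 = 0)
    (k2 : ℝ) (Ω : ℂ)
    (v : Fin 4 → ℂ) (hv : v ≠ 0)
    (heig : ((k2 : ℂ) • (Γ0 * Γ2) + M2).mulVec v = Ω • v) :
    Ω ^ 2 = (k2 : ℂ) ^ 2 + (m2 : ℂ) ^ 2 ∧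
    ((Ω = (k2 : ℂ) ∨ Ω = -(k2 : ℂ)) ↔ m2 = 0) := by
  set A := Γ0 * Γ2 with hA
  set B := (k2 : ℂ) • A + M2 with hB
  have hBB : B * B = (((k2:ℂ)^2 + (m2:ℂ)^2)) • (1 : Matrix (Fin 4) (Fin 4) ℂ) := by
    have : B * B = ((k2:ℂ)^2) • (A * A) + (k2:ℂ) • (M2 * A + A * M2) + M2 * M2 := by
      simp only [hB, Matrix.add_mul, Matrix.mul_add, Matrix.smul_mul, Matrix.mul_smul,
        smul_add, smul_smul]
      ring_nf
      abel
    rw [this, A_sq, hanti, hsq]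
    push_cast
    simp [add_smul]
  have key : (Ω ^ 2) • v = (((k2:ℂ)^2 + (m2:ℂ)^2)) • v := by
    have h1 : B.mulVec (B.mulVec v) = (Ω ^ 2) • v := by
      rw [heig, Matrix.mulVec_smul, heig, smul_smul, sq]
    have h2 : B.mulVec (B.mulVec v) = (((k2:ℂ)^2 + (m2:ℂ)^2)) • v := by
      rw [Matrix.mulVec_mulVec, hBB, Matrix.smul_mulVec, Matrix.one_mulVec]
    rw [← h1, h2]
  have hmain : Ω ^ 2 = (k2 : ℂ) ^ 2 + (m2 : ℂ) ^ 2 := by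
    by_contra hne
    apply hv
    have := sub_eq_zero.mpr key
    rw [← sub_smul] at this
    have h0 : Ω ^ 2 - ((k2:ℂ)^2 + (m2:ℂ)^2) ≠ 0 := sub_ne_zero.mpr hne
    exact (smul_eq_zero.mp this).resolve_left h0
  refine ⟨hmain, ?_, ?_⟩
  · rintro (rfl | rfl)
    · have : ((m2:ℂ))^2 = 0 := by linear_combination -hmain
      exact_mod_cast pow_eq_zero_iff (n := 2) (by norm_num) |>.mp (by exact_mod_cast this)
    · have : ((m2:ℂ))^2 = 0 := by linear_combination -hmain
      exact_mod_cast pow_eq_zero_iff (n := 2) (by norm_num) |>.mp (by exact_mod_cast this)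
  · rintro rfl
    have h : (Ω - (k2:ℂ)) * (Ω + (k2:ℂ)) = 0 := by
      push_cast at hmain; linear_combination hmain
    rcases mul_eq_zero.mp h with h | h
    · exact Or.inl (by linear_combination h)
    · exact Or.inr (by linear_combination h)
end
end

section
/- (Spectrum of the Dirac-mass armchair nanoribbon.) Let m, k₂, Ω ∈ ℝ and W > 0. Suppose there exists a differentiable function φ : ℝ → ℂ⁴, not identically zero on [0, W], satisfying the eigenvalue equation −i·Γ⁰Γ¹·φ'(x) + k₂·Γ⁰Γ²·φ(x) + m·Γ⁰·φ(x) = Ω·φ(x) for all x ∈ [0, W] together with the armchair boundary conditions (1 + i·Γ¹)·φ(0) = 0 and (1 + i·Γ¹)·φ(W) = 0. Then either Ω² = k₂² (edge branch) or there exists a natural number n ≥ 0 such that Ω² = k₂² + m² + (n·π/W)² (ordinary branch). -/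
open Matrix Complex

noncomputable section

private lemma rep_lemma (W lam : ℝ) (p g c cd s sd : ℝ → ℂ)
    (hp : ∀ x ∈ Set.Icc (0:ℝ) W, HasDerivAt p (g x) x)
    (hgd : ∀ x ∈ Set.Icc (0:ℝ) W, HasDerivAt g ((lam : ℂ) * p x) x)
    (hc : ∀ x, HasDerivAt c (cd x) x) (hcd : ∀ x, HasDerivAt cd ((lam:ℂ) * c x) x)
    (hs : ∀ x, HasDerivAt s (sd x) x) (hsd : ∀ x, HasDerivAt sd ((lam:ℂ) * s x) x)
    (hc0 : c 0 = 1) (hcd0 : cd 0 = 0) (hs0 : s 0 = 0)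
    (hp0 : p 0 = 0) :
    ∀ x ∈ Set.Icc (0:ℝ) W, sd 0 * p x = g 0 * s x := by
  have key : ∀ (F Fd : ℝ → ℂ), (∀ y, HasDerivAt F (Fd y) y) →
      (∀ y, HasDerivAt Fd ((lam:ℂ) * F y) y) →
      ∀ y ∈ Set.Icc (0:ℝ) W, F y * g y - Fd y * p y = F 0 * g 0 - Fd 0 * p 0 := by
    intro F Fd hF hFd
    have h1 : ∀ y ∈ Set.Icc (0:ℝ) W,
        HasDerivAt (fun t => F t * g t - Fd t * p t) 0 y := by
      intro y hy
      have h2 := ((hF y).mul (hgd y hy)).sub ((hFd y).mul (hp y hy))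
      exact h2.congr_deriv (by ring)
    intro y hy
    exact constant_of_has_deriv_right_zero
      (fun z hz => (h1 z hz).continuousAt.continuousWithinAt)
      (fun z hz => (h1 z (Set.Ico_subset_Icc_self hz)).hasDerivWithinAt) y hy
  have hwd : ∀ x, HasDerivAt (fun t => c t * sd t - cd t * s t) 0 x := by
    intro x
    have h2 := ((hc x).mul (hsd x)).sub ((hcd x).mul (hs x))
    exact h2.congr_deriv (by ring)
  have hwconst : ∀ x : ℝ, c x * sd x - cd x * s x = sd 0 := by
    intro x
    have h3 := is_const_of_deriv_eq_zero (f := fun t => c t * sd t - cd t * s t)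
      (fun y => (hwd y).differentiableAt) (fun y => (hwd y).deriv) x 0
    simpa [hc0, hcd0, hs0] using h3
  intro x hx
  have hA := key c cd hc hcd x hx
  have hB := key s sd hs hsd x hx
  rw [hc0, hcd0, hp0] at hA
  rw [hs0, hp0] at hB
  have hw := hwconst x
  linear_combination (s x) * hA - (c x) * hB - (p x) * hw

private lemma bvp (W lam : ℝ) (hW : 0 < W) (p g : ℝ → ℂ)
    (hp : ∀ x ∈ Set.Icc (0:ℝ) W, HasDerivAt p (g x) x)
    (hgd : ∀ x ∈ Set.Icc (0:ℝ) W, HasDerivAt g ((lam : ℂ) * p x) x)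
    (hp0 : p 0 = 0) (hpW : p W = 0)
    (hne : ∃ x ∈ Set.Icc (0:ℝ) W, p x ≠ 0) :
    ∃ n : ℕ, lam = -(((n : ℝ) * Real.pi / W)) ^ 2 := by
  obtain ⟨x₀, hx₀, hpx₀⟩ := hne
  rcases lt_trichotomy lam 0 with hl | hl | hl
  · -- oscillatory case
    set ω : ℝ := Real.sqrt (-lam) with hω_def
    have hω : 0 < ω := Real.sqrt_pos.2 (by linarith)
    have hω2 : ω ^ 2 = -lam := Real.sq_sqrt (by linarith)
    have hlamω : (lam : ℂ) = -(ω:ℂ)^2 := by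
      have : lam = -(ω^2) := by linarith
      rw [this]; push_cast; ring
    have hlin : ∀ x : ℝ, HasDerivAt (fun t : ℝ => ω * t) ω x := fun x => by
      simpa using (hasDerivAt_id x).const_mul ω
    have hcR : ∀ x, HasDerivAt (fun t => Real.cos (ω*t)) (-(Real.sin (ω*x)) * ω) x :=
      fun x => (Real.hasDerivAt_cos (ω*x)).comp x (hlin x)
    have hsR : ∀ x, HasDerivAt (fun t => Real.sin (ω*t)) (Real.cos (ω*x) * ω) x :=
      fun x => (Real.hasDerivAt_sin (ω*x)).comp x (hlin x)
    have hrep := rep_lemma W lam p g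
      (fun t => ((Real.cos (ω*t) : ℝ) : ℂ))
      (fun t => ((-(Real.sin (ω*t)) * ω : ℝ) : ℂ))
      (fun t => ((Real.sin (ω*t) : ℝ) : ℂ))
      (fun t => ((Real.cos (ω*t) * ω : ℝ) : ℂ))
      hp hgd
      (fun x => (hcR x).ofReal_comp)
      (fun x => by
        have h5 := (((hsR x).const_mul ω).neg).ofReal_comp
        convert h5 using 1
        · funext t; simp only [Pi.neg_apply]; push_cast; ring
        · rw [hlamω]; push_cast; ring)
      (fun x => (hsR x).ofReal_comp)
      (fun x => by
        have h5 := ((hcR x).const_mul ω).ofReal_comp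
        convert h5 using 1
        · funext t; push_cast; ring
        · rw [hlamω]; push_cast; ring)
      (by norm_num) (by norm_num) (by norm_num) hp0
    have hωc : (ω : ℂ) ≠ 0 := by exact_mod_cast hω.ne'
    by_cases hg0 : g 0 = 0
    · exfalso
      have h6 : (ω : ℂ) * p x₀ = 0 := by simpa [hg0] using hrep x₀ hx₀
      exact hpx₀ ((mul_eq_zero.1 h6).resolve_left hωc)
    · have h6 : g 0 * ((Real.sin (ω * W) : ℝ) : ℂ) = 0 := by
        simpa [hpW] using (hrep W (Set.right_mem_Icc.2 hW.le)).symm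
      have hsin : Real.sin (ω * W) = 0 := by
        have := (mul_eq_zero.1 h6).resolve_left hg0
        exact_mod_cast this
      obtain ⟨k, hk⟩ := Real.sin_eq_zero_iff.1 hsin
      have hπ := Real.pi_pos
      have hωW : 0 < ω * W := mul_pos hω hW
      have hkpos : 0 < k := by
        by_contra hk0
        push_neg at hk0
        have : (k:ℝ) * Real.pi ≤ 0 :=
          mul_nonpos_iff.2 (Or.inr ⟨by exact_mod_cast hk0, hπ.le⟩)
        linarith
      refine ⟨k.toNat, ?_⟩
      have hkn : ((k.toNat : ℕ) : ℝ) = (k : ℝ) := by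
        exact_mod_cast Int.toNat_of_nonneg hkpos.le
      have hωval : (k.toNat : ℝ) * Real.pi / W = ω := by
        rw [hkn]
        field_simp
        linarith
      rw [hωval]
      linarith
  · -- lam = 0
    exfalso
    have hrep := rep_lemma W lam p g
      (fun _ => (1:ℂ)) (fun _ => (0:ℂ)) (fun t => (t : ℂ)) (fun _ => (1:ℂ))
      hp hgd
      (fun x => hasDerivAt_const x 1)
      (fun x => by simpa [hl] using hasDerivAt_const x (0:ℂ))
      (fun x => (hasDerivAt_id x).ofReal_comp.congr_deriv (by simp))
      (fun x => by simpa [hl] using hasDerivAt_const x (1:ℂ))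
      rfl rfl (by norm_num) hp0
    have h6 : g 0 * (W : ℂ) = 0 := by
      simpa [hpW] using (hrep W (Set.right_mem_Icc.2 hW.le)).symm
    have hg0 : g 0 = 0 := by
      have hWc : (W : ℂ) ≠ 0 := by exact_mod_cast hW.ne'
      exact (mul_eq_zero.1 h6).resolve_right hWc
    have h7 : p x₀ = 0 := by simpa [hg0] using hrep x₀ hx₀
    exact hpx₀ h7
  · -- lam > 0 : impossible
    exfalso
    set ω : ℝ := Real.sqrt lam with hω_def
    have hω : 0 < ω := Real.sqrt_pos.2 hl
    have hω2 : ω ^ 2 = lam := Real.sq_sqrt hl.le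
    have hlamω : (lam : ℂ) = (ω:ℂ)^2 := by
      rw [← hω2]; push_cast; ring
    have hlin : ∀ x : ℝ, HasDerivAt (fun t : ℝ => ω * t) ω x := fun x => by
      simpa using (hasDerivAt_id x).const_mul ω
    have hcR : ∀ x, HasDerivAt (fun t => Real.cosh (ω*t)) (Real.sinh (ω*x) * ω) x :=
      fun x => (Real.hasDerivAt_cosh (ω*x)).comp x (hlin x)
    have hsR : ∀ x, HasDerivAt (fun t => Real.sinh (ω*t)) (Real.cosh (ω*x) * ω) x :=
      fun x => (Real.hasDerivAt_sinh (ω*x)).comp x (hlin x)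
    have hrep := rep_lemma W lam p g
      (fun t => ((Real.cosh (ω*t) : ℝ) : ℂ))
      (fun t => ((Real.sinh (ω*t) * ω : ℝ) : ℂ))
      (fun t => ((Real.sinh (ω*t) : ℝ) : ℂ))
      (fun t => ((Real.cosh (ω*t) * ω : ℝ) : ℂ))
      hp hgd
      (fun x => (hcR x).ofReal_comp)
      (fun x => by
        have h5 := ((hsR x).const_mul ω).ofReal_comp
        convert h5 using 1
        · funext t; push_cast; ring
        · rw [hlamω]; push_cast; ring)
      (fun x => (hsR x).ofReal_comp)
      (fun x => by
        have h5 := ((hcR x).const_mul ω).ofReal_comp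
        convert h5 using 1
        · funext t; push_cast; ring
        · rw [hlamω]; push_cast; ring)
      (by norm_num) (by norm_num) (by norm_num) hp0
    have hωc : (ω : ℂ) ≠ 0 := by exact_mod_cast hω.ne'
    have h6 : g 0 * ((Real.sinh (ω * W) : ℝ) : ℂ) = 0 := by
      simpa [hpW] using (hrep W (Set.right_mem_Icc.2 hW.le)).symm
    have hsh : Real.sinh (ω * W) ≠ 0 := (Real.sinh_pos_iff.2 (mul_pos hω hW)).ne'
    have hg0 : g 0 = 0 := by
      have hshc : ((Real.sinh (ω*W) : ℝ) : ℂ) ≠ 0 := by exact_mod_cast hsh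
      exact (mul_eq_zero.1 h6).resolve_right hshc
    have h7 : (ω : ℂ) * p x₀ = 0 := by simpa [hg0] using hrep x₀ hx₀
    exact hpx₀ ((mul_eq_zero.1 h7).resolve_left hωc)

set_option maxHeartbeats 4000000 in
/-- spectrum of the Dirac-mass armchair nanoribbon: any nontrivial
solution of the eigenvalue equation with mass mΓ⁰ and armchair boundary
conditions has either Ω² = k₂² (edge branch) or Ω² = k₂² + m² + (nπ/W)² for some
natural number n (ordinary branch). -/
theorem dirac_mass_armchair_spectrum
    (m k2 Ω W : ℝ) (hW : W > 0)
    (φ : ℝ → Fin 4 → ℂ) (hdiff : Differentiable ℝ φ)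
    (hnz : ∃ x ∈ Set.Icc (0 : ℝ) W, φ x ≠ 0)
    (heq : ∀ x ∈ Set.Icc (0 : ℝ) W,
      (-Complex.I) • (Γ0 * Γ1).mulVec (deriv φ x)
        + (k2 : ℂ) • (Γ0 * Γ2).mulVec (φ x)
        + ((m : ℂ) • Γ0).mulVec (φ x) = ((Ω : ℝ) : ℂ) • φ x)
    (hbc0 : ((1 : Matrix (Fin 4) (Fin 4) ℂ) + Complex.I • Γ1).mulVec (φ 0) = 0)
    (hbcW : ((1 : Matrix (Fin 4) (Fin 4) ℂ) + Complex.I • Γ1).mulVec (φ W) = 0) :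
    Ω ^ 2 = k2 ^ 2 ∨
    ∃ n : ℕ, Ω ^ 2 = k2 ^ 2 + m ^ 2 + ((n : ℝ) * Real.pi / W) ^ 2 := by
  have G01e : Γ0 * Γ1 = !![0,1,0,0; 1,0,0,0; 0,0,0,-1; 0,0,-1,0] := by
    ext i j
    fin_cases i <;> fin_cases j <;>
      norm_num [Γ0, Γ1, kron, σ0, σ1, σ2, σ3, Matrix.mul_apply, Fin.sum_univ_four,
        Matrix.one_apply, Matrix.vecHead, Matrix.vecTail, Function.comp, Complex.I_mul_I, Matrix.cons_val_two, Matrix.cons_val_three]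
  have G02e : Γ0 * Γ2 = !![0,-Complex.I,0,0; Complex.I,0,0,0; 0,0,0,-Complex.I; 0,0,Complex.I,0] := by
    ext i j
    fin_cases i <;> fin_cases j <;>
      norm_num [Γ0, Γ2, kron, σ0, σ1, σ2, σ3, Matrix.mul_apply, Fin.sum_univ_four,
        Matrix.one_apply, Matrix.vecHead, Matrix.vecTail, Function.comp, Complex.I_mul_I, Matrix.cons_val_two, Matrix.cons_val_three]
  have G0e : Γ0 = !![0,0,0,Complex.I; 0,0,Complex.I,0; 0,-Complex.I,0,0; -Complex.I,0,0,0] := by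
    ext i j
    fin_cases i <;> fin_cases j <;>
      norm_num [Γ0, kron, σ1, σ2, Matrix.vecHead, Matrix.vecTail, Function.comp]
  have Pe : (1 : Matrix (Fin 4) (Fin 4) ℂ) + Complex.I • Γ1 = !![1,0,1,0; 0,1,0,1; 1,0,1,0; 0,1,0,1] := by
    ext i j
    fin_cases i <;> fin_cases j <;>
      norm_num [Γ1, kron, σ0, σ1, Matrix.one_apply, Matrix.vecHead, Matrix.vecTail,
        Function.comp, Complex.I_mul_I, Fin.ext_iff]
  -- componentwise derivatives
  have hD : ∀ (x : ℝ) (i : Fin 4), HasDerivAt (fun t => φ t i) (deriv φ x i) x :=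
    fun x i => hasDerivAt_pi.1 (hdiff x).hasDerivAt i
  -- the scalar form of the eigenvalue equation
  have key : ∀ x ∈ Set.Icc (0:ℝ) W,
      deriv φ x 0 = (k2:ℂ) * φ x 0 + (m:ℂ) * φ x 2 + Complex.I * (Ω:ℂ) * φ x 1 ∧
      deriv φ x 1 = -(k2:ℂ) * φ x 1 + (m:ℂ) * φ x 3 + Complex.I * (Ω:ℂ) * φ x 0 ∧
      deriv φ x 2 = (m:ℂ) * φ x 0 - (k2:ℂ) * φ x 2 - Complex.I * (Ω:ℂ) * φ x 3 ∧
      deriv φ x 3 = (m:ℂ) * φ x 1 + (k2:ℂ) * φ x 3 - Complex.I * (Ω:ℂ) * φ x 2 := by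
    intro x hx
    have h := heq x hx
    rw [G01e, G02e, G0e] at h
    have h0 := congrFun h 0
    have h1 := congrFun h 1
    have h2 := congrFun h 2
    have h3 := congrFun h 3
    simp [Matrix.mulVec, dotProduct, Fin.sum_univ_four, Matrix.vecHead,
      Matrix.vecTail, Function.comp] at h0 h1 h2 h3
    refine ⟨?_, ?_, ?_, ?_⟩
    · linear_combination Complex.I * h1 +
        (deriv φ x 0 - (k2:ℂ) * φ x 0 - (m:ℂ) * φ x 2) * Complex.I_sq
    · linear_combination Complex.I * h0 +
        (deriv φ x 1 + (k2:ℂ) * φ x 1 - (m:ℂ) * φ x 3) * Complex.I_sq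
    · linear_combination (-Complex.I) * h3 +
        (deriv φ x 2 - (m:ℂ) * φ x 0 + (k2:ℂ) * φ x 2) * Complex.I_sq
    · linear_combination (-Complex.I) * h2 +
        (deriv φ x 3 - (m:ℂ) * φ x 1 - (k2:ℂ) * φ x 3) * Complex.I_sq
  -- boundary conditions in scalar form
  rw [Pe] at hbc0 hbcW
  have hbc00 := congrFun hbc0 0
  have hbc01 := congrFun hbc0 1
  have hbcW0 := congrFun hbcW 0
  have hbcW1 := congrFun hbcW 1
  simp [Matrix.mulVec, dotProduct, Fin.sum_univ_four, Matrix.vecHead,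
    Matrix.vecTail, Function.comp] at hbc00 hbc01 hbcW0 hbcW1
  -- first-order derivative facts for the symmetric/antisymmetric combinations
  have hPD : ∀ x ∈ Set.Icc (0:ℝ) W, HasDerivAt (fun t => φ t 0 + φ t 2)
      ((m:ℂ) * (φ x 0 + φ x 2) + (k2:ℂ) * (φ x 0 - φ x 2)
        + Complex.I * (Ω:ℂ) * (φ x 1 - φ x 3)) x := by
    intro x hx
    obtain ⟨e0, e1, e2, e3⟩ := key x hx
    have h := (hD x 0).add (hD x 2)
    refine h.congr_deriv (Eq.symm ?_)
    rw [e0, e2]; ring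
  have hQD : ∀ x ∈ Set.Icc (0:ℝ) W, HasDerivAt (fun t => φ t 1 + φ t 3)
      ((m:ℂ) * (φ x 1 + φ x 3) - (k2:ℂ) * (φ x 1 - φ x 3)
        + Complex.I * (Ω:ℂ) * (φ x 0 - φ x 2)) x := by
    intro x hx
    obtain ⟨e0, e1, e2, e3⟩ := key x hx
    have h := (hD x 1).add (hD x 3)
    refine h.congr_deriv (Eq.symm ?_)
    rw [e1, e3]; ring
  have hGPD : ∀ x ∈ Set.Icc (0:ℝ) W, HasDerivAt
      (fun t => (m:ℂ) * (φ t 0 + φ t 2) + (k2:ℂ) * (φ t 0 - φ t 2)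
        + Complex.I * (Ω:ℂ) * (φ t 1 - φ t 3))
      (((k2^2 + m^2 - Ω^2 : ℝ) : ℂ) * (φ x 0 + φ x 2)) x := by
    intro x hx
    obtain ⟨e0, e1, e2, e3⟩ := key x hx
    have h := ((((hD x 0).add (hD x 2)).const_mul ((m:ℂ))).add
        (((hD x 0).sub (hD x 2)).const_mul ((k2:ℂ)))).add
        (((hD x 1).sub (hD x 3)).const_mul (Complex.I * (Ω:ℂ)))
    refine h.congr_deriv (Eq.symm ?_)
    rw [e0, e1, e2, e3]
    push_cast
    linear_combination (-(Ω:ℂ)^2 * (φ x 0 + φ x 2)) * Complex.I_sq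
  have hGQD : ∀ x ∈ Set.Icc (0:ℝ) W, HasDerivAt
      (fun t => (m:ℂ) * (φ t 1 + φ t 3) - (k2:ℂ) * (φ t 1 - φ t 3)
        + Complex.I * (Ω:ℂ) * (φ t 0 - φ t 2))
      (((k2^2 + m^2 - Ω^2 : ℝ) : ℂ) * (φ x 1 + φ x 3)) x := by
    intro x hx
    obtain ⟨e0, e1, e2, e3⟩ := key x hx
    have h := ((((hD x 1).add (hD x 3)).const_mul ((m:ℂ))).sub
        (((hD x 1).sub (hD x 3)).const_mul ((k2:ℂ)))).add
        (((hD x 0).sub (hD x 2)).const_mul (Complex.I * (Ω:ℂ)))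
    refine h.congr_deriv (Eq.symm ?_)
    rw [e0, e1, e2, e3]
    push_cast
    linear_combination (-(Ω:ℂ)^2 * (φ x 1 + φ x 3)) * Complex.I_sq
  by_cases hcase : (∀ x ∈ Set.Icc (0:ℝ) W, φ x 0 + φ x 2 = 0) ∧
      (∀ x ∈ Set.Icc (0:ℝ) W, φ x 1 + φ x 3 = 0)
  · -- edge branch
    left
    by_contra hO
    obtain ⟨hP, hQ⟩ := hcase
    have hzero : ∀ x ∈ Set.Ioo (0:ℝ) W, φ x = 0 := by
      intro x hx
      have hxI : x ∈ Set.Icc (0:ℝ) W := Set.Ioo_subset_Icc_self hx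
      have hev : (fun t => φ t 0 + φ t 2) =ᶠ[nhds x] (fun _ => (0:ℂ)) := by
        filter_upwards [isOpen_Ioo.mem_nhds hx] with y hy
        exact hP y (Set.Ioo_subset_Icc_self hy)
      have hev' : (fun t => φ t 1 + φ t 3) =ᶠ[nhds x] (fun _ => (0:ℂ)) := by
        filter_upwards [isOpen_Ioo.mem_nhds hx] with y hy
        exact hQ y (Set.Ioo_subset_Icc_self hy)
      have h1 : (m:ℂ) * (φ x 0 + φ x 2) + (k2:ℂ) * (φ x 0 - φ x 2)
          + Complex.I * (Ω:ℂ) * (φ x 1 - φ x 3) = 0 :=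
        (hPD x hxI).unique ((hasDerivAt_const x (0:ℂ)).congr_of_eventuallyEq hev)
      have h2 : (m:ℂ) * (φ x 1 + φ x 3) - (k2:ℂ) * (φ x 1 - φ x 3)
          + Complex.I * (Ω:ℂ) * (φ x 0 - φ x 2) = 0 :=
        (hQD x hxI).unique ((hasDerivAt_const x (0:ℂ)).congr_of_eventuallyEq hev')
      have hpx := hP x hxI
      have hqx := hQ x hxI
      have hk : ((k2^2 - Ω^2 : ℝ) : ℂ) ≠ 0 := by
        rw [Complex.ofReal_ne_zero]
        exact sub_ne_zero.2 (fun hh => hO hh.symm)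
      have hr : φ x 0 - φ x 2 = 0 := by
        have hh : ((k2^2 - Ω^2 : ℝ) : ℂ) * (φ x 0 - φ x 2) = 0 := by
          push_cast
          linear_combination (k2:ℂ) * h1 + Complex.I * (Ω:ℂ) * h2
            - ((m:ℂ) * (k2:ℂ)) * hpx - (Complex.I * (Ω:ℂ) * (m:ℂ)) * hqx
            + (-(Ω:ℂ)^2 * (φ x 0 - φ x 2)) * Complex.I_sq
        exact (mul_eq_zero.1 hh).resolve_left hk
      have hs : φ x 1 - φ x 3 = 0 := by
        have hh : ((k2^2 - Ω^2 : ℝ) : ℂ) * (φ x 1 - φ x 3) = 0 := by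
          push_cast
          linear_combination (Complex.I * (Ω:ℂ)) * h1 - (k2:ℂ) * h2
            - (Complex.I * (Ω:ℂ) * (m:ℂ)) * hpx + ((m:ℂ) * (k2:ℂ)) * hqx
            + (-(Ω:ℂ)^2 * (φ x 1 - φ x 3)) * Complex.I_sq
        exact (mul_eq_zero.1 hh).resolve_left hk
      have c0 : φ x 0 = 0 := by linear_combination (1/2 : ℂ) * hpx + (1/2 : ℂ) * hr
      have c2 : φ x 2 = 0 := by linear_combination (1/2 : ℂ) * hpx - (1/2 : ℂ) * hr
      have c1 : φ x 1 = 0 := by linear_combination (1/2 : ℂ) * hqx + (1/2 : ℂ) * hs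
      have c3 : φ x 3 = 0 := by linear_combination (1/2 : ℂ) * hqx - (1/2 : ℂ) * hs
      funext i
      fin_cases i <;> simp only [Pi.zero_apply] <;> assumption
    have hcl : Set.EqOn φ 0 (Set.Icc 0 W) := by
      have h1 : Set.EqOn φ 0 (Set.Ioo 0 W) := fun x hx => hzero x hx
      have h2 := h1.closure (hdiff.continuous) continuous_const
      rwa [closure_Ioo hW.ne] at h2
    obtain ⟨x, hx, hxne⟩ := hnz
    exact hxne (hcl hx)
  · -- ordinary branch
    right
    rw [not_and_or] at hcase
    rcases hcase with hc | hc
    · push_neg at hc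
      obtain ⟨x₀, hx₀, hne0⟩ := hc
      obtain ⟨n, hn⟩ := bvp W (k2^2 + m^2 - Ω^2) hW (fun t => φ t 0 + φ t 2)
        (fun t => (m:ℂ) * (φ t 0 + φ t 2) + (k2:ℂ) * (φ t 0 - φ t 2)
          + Complex.I * (Ω:ℂ) * (φ t 1 - φ t 3))
        hPD hGPD (by linear_combination hbc00) (by linear_combination hbcW0)
        ⟨x₀, hx₀, hne0⟩
      exact ⟨n, by linarith⟩
    · push_neg at hc
      obtain ⟨x₀, hx₀, hne0⟩ := hc
      obtain ⟨n, hn⟩ := bvp W (k2^2 + m^2 - Ω^2) hW (fun t => φ t 1 + φ t 3)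
        (fun t => (m:ℂ) * (φ t 1 + φ t 3) - (k2:ℂ) * (φ t 1 - φ t 3)
          + Complex.I * (Ω:ℂ) * (φ t 0 - φ t 2))
        hQD hGQD (by linear_combination hbc01) (by linear_combination hbcW1)
        ⟨x₀, hx₀, hne0⟩
      exact ⟨n, by linarith⟩
end
end

section
/- (Protection of the gapless edge modes against scalar impurities.) For α ∈ {1, −1} and m ∈ ℝ, let φ_α(x) := e^{−m·x}·(i·α, −1, −i·α, 1) ∈ ℂ⁴ be the gapless edge modes of the Dirac-mass armchair nanoribbon. Then for every x ∈ ℝ: (i) the scalar-potential backscattering matrix element vanishes, ⟨φ_{−α}(x), φ_α(x)⟩ = 0, i.e. the sum over components of conj(φ_{−α}(x))·φ_α(x) is zero (this is the matrix element φ̄_{−α} Γ⁰ φ_α of a scalar potential ∝ Γ⁰); and (ii) the matrix element of a valley-odd potential vanishes as well: φ_α(x)† · (Γ⁰Γ⁵) · φ_α(x) = 0, where † denotes the conjugate-transpose pairing (this is the matrix element φ̄_α V φ_α for V = −Γ⁵ = σ₃ ⊗ σ₀). -/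
open Matrix Complex

noncomputable section

/-- The gapless edge mode φ_α(x) = e^{−mx} (iα, −1, −iα, 1) of the Dirac-mass
armchair nanoribbon. -/
def edgeMode (m α : ℝ) (x : ℝ) : Fin 4 → ℂ :=
  Complex.exp (-(m : ℂ) * (x : ℂ)) •
    ![Complex.I * (α : ℂ), -1, -Complex.I * (α : ℂ), 1]

set_option maxHeartbeats 2000000 in
/-- protection against scalar impurities: the scalar-potential
backscattering matrix element ⟨φ_{−α}(x), φ_α(x)⟩ vanishes, and the matrix
element φ_α(x)† (Γ⁰Γ⁵) φ_α(x) of a valley-odd potential vanishes as well. -/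
theorem edge_mode_protection (m α : ℝ) (hα : α = 1 ∨ α = -1) (x : ℝ) :
    (∑ j : Fin 4, (starRingEnd ℂ) (edgeMode m (-α) x j) * edgeMode m α x j) = 0 ∧
    (∑ j : Fin 4, (starRingEnd ℂ) (edgeMode m α x j)
        * (Γ0 * Γ5).mulVec (edgeMode m α x) j) = 0 := by
  have h0 : Γ0 = !![0, 0, 0, Complex.I; 0, 0, Complex.I, 0;
      0, -Complex.I, 0, 0; -Complex.I, 0, 0, 0] := by
    rw [Γ0, kron]; simp [σ1, σ2]
  have h1 : Γ1 = !![0, 0, -Complex.I, 0; 0, 0, 0, -Complex.I;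
      -Complex.I, 0, 0, 0; 0, -Complex.I, 0, 0] := by
    rw [Γ1, kron]; simp [σ0, σ1, Matrix.one_apply]
  have h2 : Γ2 = !![0, 0, -1, 0; 0, 0, 0, 1; 1, 0, 0, 0; 0, -1, 0, 0] := by
    rw [Γ2, kron]; simp [σ2, σ3]
  have h3 : Γ3 = !![0, 0, 0, Complex.I; 0, 0, -Complex.I, 0;
      0, -Complex.I, 0, 0; Complex.I, 0, 0, 0] := by
    rw [Γ3, kron]; simp [σ2]
  have hG : Γ0 * Γ5 = !![0,0,0,Complex.I; 0,0,Complex.I,0;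
      0,Complex.I,0,0; Complex.I,0,0,0] := by
    rw [Γ5, h0, h1, h2, h3]
    ext i j
    fin_cases i <;> fin_cases j <;>
      simp [Matrix.mul_apply, Fin.sum_univ_four, Matrix.vecHead, Matrix.vecTail,
        Complex.ext_iff]
  rcases hα with h | h <;> subst h <;> constructor <;>
  · simp only [hG, edgeMode, Fin.sum_univ_four, Matrix.cons_mulVec,
      Matrix.cons_dotProduct, Matrix.dotProduct_of_isEmpty, Pi.smul_apply, smul_eq_mul,
      Matrix.cons_val_zero, Matrix.cons_val_one, Matrix.head_cons,
      Matrix.cons_val_two, Matrix.cons_val_three, Matrix.vecHead, Matrix.vecTail,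
      Matrix.cons_val_succ, Matrix.empty_mulVec, dotProduct,
      _root_.map_mul, map_neg, Complex.conj_I, Function.comp_apply]
    push_cast
    ring_nf
    try simp [Complex.I_sq]
    try ring_nf
end
end
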